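/- Let f : ℝ^d → ℝ be continuously differentiable with ξ ≤ f(x) ≤ ζ for all x (where 0 < ξ ≤ ζ), and suppose |f(x) - f(y)| ≤ γ‖x - y‖₂ and ‖∇f(x) - ∇f(y)‖₂ ≤ γ‖x - y‖₂ for all x, y. Fix σ ∈ (0,1], t ∈ [0,1], x ∈ ℝ^d, and let Z₁, …, Z_m be i.i.d. N(0, I_d) random vectors. Define b(x,t) = E_{Z∼N(0,I_d)}[∇f(x + √((1-t)σ) Z)] / E_{Z∼N(0,I_d)}[f(x + √((1-t)σ) Z)] and the Monte Carlo estimator b̃_m(x,t) = ( m^{-1} Σ_{j=1}^m ∇f(x + √((1-t)σ) Z_j) ) / ( m^{-1} Σ_{j=1}^m f(x + √((1-t)σ) Z_j) ). Then E[ ‖b(x,t) - b̃_m(x,t)‖₂² ] ≤ (4d/m) · ( γ⁴/ξ⁴ + γ²ζ²/ξ⁴ ), uniformly in x ∈ ℝ^d and t ∈ [0,1]. -/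

import Mathlib

/-!
Write `b = B⁻¹ A` and `b̃ = B̂⁻¹ Â`, where `A, B` are the Gaussian means of `∇f` and `f` at
`x + √((1-t)σ) Z` and `Â, B̂` the corresponding sample means. Since `B, B̂ ≥ ξ` and `‖A‖ ≤ γ`
(the gradient of a `γ`-Lipschitz function is bounded by `γ`),
`‖b - b̃‖² ≤ 2ξ⁻² ‖Â - A‖² + 2γ²ξ⁻⁴ (B̂ - B)²`.
For i.i.d. samples of a function bounded by `K` with values in a Hilbert space, the cross terms of
`E ‖Â - A‖²` vanish by independence and each diagonal term is a variance, at most `K²`; hence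
`E ‖Â - A‖² ≤ K² / m`. With `K = γ` for `∇f` and `K = ζ` for `f` this gives
`E ‖b - b̃‖² ≤ 2γ²/(ξ²m) + 2γ²ζ²/(ξ⁴m) ≤ 4γ²ζ²/(ξ⁴m)`, which is below the claimed bound as soon
as `d ≥ 1`; for `d = 0` both sides vanish.
-/

open MeasureTheory Real Filter Set ProbabilityTheory

/-- The standard Gaussian measure `N(0, I_d)` on `ℝ^d`, defined through its density
with respect to Lebesgue measure. -/
noncomputable def stdGaussian (d : ℕ) : Measure (EuclideanSpace ℝ (Fin d)) :=
  volume.withDensity fun z =>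
    ENNReal.ofReal ((2 * π) ^ (-(d : ℝ) / 2) * Real.exp (-‖z‖ ^ 2 / 2))

/-- The Schrödinger–Föllmer drift
`b(x,t) = E[∇f(x + √((1-t)σ) Z)] / E[f(x + √((1-t)σ) Z)]`, `Z ∼ N(0, I_d)`. -/
noncomputable def driftSF {d : ℕ} (f : EuclideanSpace ℝ (Fin d) → ℝ) (σ : ℝ)
    (x : EuclideanSpace ℝ (Fin d)) (t : ℝ) : EuclideanSpace ℝ (Fin d) :=
  (∫ z, f (x + Real.sqrt ((1 - t) * σ) • z) ∂(stdGaussian d))⁻¹ •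
    ∫ z, gradient f (x + Real.sqrt ((1 - t) * σ) • z) ∂(stdGaussian d)

open scoped NNReal InnerProductSpace

instance isProbabilityMeasure_stdGaussian (d : ℕ) : IsProbabilityMeasure (stdGaussian d) where
  measure_univ := by
    have hgauss : ∫ z : EuclideanSpace ℝ (Fin d), Real.exp (-‖z‖ ^ 2 / 2)
        = (2 * π) ^ ((d : ℝ) / 2) := by
      simp_rw [neg_div, div_eq_inv_mul, ← neg_mul]
      rw [GaussianFourier.integral_rexp_neg_mul_sq_norm (by norm_num), finrank_euclideanSpace_fin]
      norm_num [div_eq_inv_mul, mul_comm]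
    have hint := (Integrable.of_integral_ne_zero (hgauss.trans_ne (by positivity))).const_mul
      ((2 * π) ^ (-(d : ℝ) / 2))
    rw [_root_.stdGaussian, withDensity_apply _ .univ, Measure.restrict_univ,
      ← ofReal_integral_eq_lintegral_ofReal hint (ae_of_all _ fun _ => by positivity),
      integral_const_mul, hgauss, ← Real.rpow_add (by positivity)]
    rw [neg_div, neg_add_cancel, Real.rpow_zero, ENNReal.ofReal_one]

section Gradient

variable {H : Type*} [NormedAddCommGroup H] [InnerProductSpace ℝ H] [CompleteSpace H]

theorem norm_gradient_le_of_lipschitzWith {f : H → ℝ} {K : ℝ≥0} (hf : LipschitzWith K f)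
    (x : H) : ‖gradient f x‖ ≤ K :=
  ((InnerProductSpace.toDual ℝ H).symm.norm_map _).trans_le (norm_fderiv_le_of_lipschitz ℝ hf)

theorem measurable_gradient [MeasurableSpace H] [BorelSpace H] (f : H → ℝ) :
    Measurable (gradient f) :=
  (InnerProductSpace.toDual ℝ H).symm.continuous.measurable.comp (measurable_fderiv ℝ f)

end Gradient

theorem norm_inv_smul_sub_inv_smul_sq_le {F : Type*} [NormedAddCommGroup F] [NormedSpace ℝ F]
    {A Y : F} {B B' ξ K : ℝ} (hξ : 0 < ξ) (hB : ξ ≤ B) (hB' : ξ ≤ B') (hA : ‖A‖ ≤ K) :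
    ‖B⁻¹ • A - B'⁻¹ • Y‖ ^ 2 ≤ 2 / ξ ^ 2 * ‖Y - A‖ ^ 2 + 2 * K ^ 2 / ξ ^ 4 * (B' - B) ^ 2 := by
  have hB0 : 0 < B := hξ.trans_le hB
  have hB'0 : 0 < B' := hξ.trans_le hB'
  have hsplit : B⁻¹ • A - B'⁻¹ • Y = B'⁻¹ • (A - Y) + ((B' - B) / (B * B')) • A := by
    rw [show (B' - B) / (B * B') = B⁻¹ - B'⁻¹ by field_simp, smul_sub, sub_smul]
    abel
  have h1 : ‖B'⁻¹ • (A - Y)‖ ≤ ‖Y - A‖ / ξ := by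
    rw [norm_smul, norm_inv, Real.norm_of_nonneg hB'0.le, norm_sub_rev, inv_mul_eq_div]
    gcongr
  have h2 : ‖((B' - B) / (B * B')) • A‖ ≤ |B' - B| * K / ξ ^ 2 := by
    rw [norm_smul, Real.norm_eq_abs, abs_div, abs_of_pos (mul_pos hB0 hB'0), div_mul_eq_mul_div,
      sq]
    have := (norm_nonneg A).trans hA
    gcongr
  calc ‖B⁻¹ • A - B'⁻¹ • Y‖ ^ 2 ≤ (‖Y - A‖ / ξ + |B' - B| * K / ξ ^ 2) ^ 2 := by
        gcongr
        exact hsplit ▸ (norm_add_le _ _).trans (add_le_add h1 h2)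
    _ ≤ 2 * ((‖Y - A‖ / ξ) ^ 2 + (|B' - B| * K / ξ ^ 2) ^ 2) := add_sq_le
    _ = _ := by rw [div_pow, div_pow, mul_pow, sq_abs, ← pow_mul]; ring

section Average

variable {ι F : Type*} [Fintype ι] [Nonempty ι] [NormedAddCommGroup F] [NormedSpace ℝ F]

theorem inv_card_smul_sum_sub_eq (w : ι → F) (a : F) :
    (Fintype.card ι : ℝ)⁻¹ • ∑ j, w j - a = (Fintype.card ι : ℝ)⁻¹ • ∑ j, (w j - a) := by
  rw [Finset.sum_sub_distrib, smul_sub, Finset.sum_const, Finset.card_univ,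
    ← Nat.cast_smul_eq_nsmul ℝ, inv_smul_smul₀ (by positivity)]

theorem norm_inv_card_smul_sum_le {w : ι → F} {K : ℝ} (h : ∀ j, ‖w j‖ ≤ K) :
    ‖(Fintype.card ι : ℝ)⁻¹ • ∑ j, w j‖ ≤ K := by
  rw [norm_smul, norm_inv, Real.norm_natCast, inv_mul_le_iff₀ (by positivity)]
  have := (norm_sum_le _ _).trans (Finset.sum_le_card_nsmul Finset.univ (‖w ·‖) K fun j _ => h j)
  rwa [Finset.card_univ, nsmul_eq_mul] at this

theorem le_inv_card_mul_sum {u : ι → ℝ} {ξ : ℝ} (h : ∀ j, ξ ≤ u j) :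
    ξ ≤ (Fintype.card ι : ℝ)⁻¹ * ∑ j, u j := by
  rw [le_inv_mul_iff₀ (by positivity)]
  have := Finset.card_nsmul_le_sum Finset.univ u ξ fun j _ => h j
  rwa [Finset.card_univ, nsmul_eq_mul] at this

end Average

section MonteCarlo

variable {Ω E F ι : Type*} [MeasurableSpace Ω] {P : Measure Ω} [MeasurableSpace E] {μ : Measure E}
  [NormedAddCommGroup F] [InnerProductSpace ℝ F] [Fintype ι]

theorem integral_norm_sub_integral_sq_le [CompleteSpace F] [IsProbabilityMeasure μ] {g : E → F}
    {K : ℝ} (hg : AEStronglyMeasurable g μ) (hgK : ∀ z, ‖g z‖ ≤ K) :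
    ∫ z, ‖g z - ∫ w, g w ∂μ‖ ^ 2 ∂μ ≤ K ^ 2 := by
  set a := ∫ w, g w ∂μ
  have hgint : Integrable g μ := .of_bound hg K (ae_of_all _ hgK)
  have hsqint : Integrable (fun z => ‖g z‖ ^ 2) μ :=
    .of_bound (hg.norm.pow 2) (K ^ 2) (ae_of_all _ fun z => by
      rw [Real.norm_of_nonneg (by positivity)]
      exact pow_le_pow_left₀ (norm_nonneg _) (hgK z) 2)
  have hinnerint : Integrable (fun z => 2 * ⟪a, g z⟫_ℝ) μ :=
    (hgint.const_inner a).const_mul 2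
  calc ∫ z, ‖g z - a‖ ^ 2 ∂μ = ∫ z, ‖g z‖ ^ 2 ∂μ - ‖a‖ ^ 2 := by
        simp_rw [norm_sub_sq_real, real_inner_comm a]
        rw [integral_add (by exact hsqint.sub hinnerint) (integrable_const _),
          integral_sub hsqint hinnerint, integral_const_mul, integral_inner hgint,
          real_inner_self_eq_norm_sq]
        simp only [integral_const, probReal_univ, one_smul]
        ring
    _ ≤ ∫ z, ‖g z‖ ^ 2 ∂μ := sub_le_self _ (sq_nonneg _)
    _ ≤ ∫ _, K ^ 2 ∂μ :=
        integral_mono hsqint (integrable_const _) fun z =>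
          pow_le_pow_left₀ (norm_nonneg _) (hgK z) 2
    _ = K ^ 2 := by simp

theorem integral_norm_sum_sq_of_orthogonal {V : ι → Ω → F}
    (hint : ∀ i j, Integrable (fun ω => ⟪V i ω, V j ω⟫_ℝ) P)
    (horth : Pairwise fun i j => ∫ ω, ⟪V i ω, V j ω⟫_ℝ ∂P = 0) :
    ∫ ω, ‖∑ i, V i ω‖ ^ 2 ∂P = ∑ i, ∫ ω, ‖V i ω‖ ^ 2 ∂P := by
  classical
  simp_rw [← real_inner_self_eq_norm_sq, sum_inner, inner_sum]
  rw [integral_finsetSum _ fun i _ => integrable_finsetSum _ fun j _ => hint i j]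
  refine Finset.sum_congr rfl fun i _ => ?_
  rw [integral_finsetSum _ fun j _ => hint i j,
    Finset.sum_eq_single i (fun j _ hji => horth hji.symm) (by simp)]

theorem integral_comp_of_map_eq {G : Type*} [NormedAddCommGroup G] [NormedSpace ℝ G]
    {X : Ω → E} (hX : AEMeasurable X P) (hlaw : P.map X = μ) {φ : E → G}
    (hφ : AEStronglyMeasurable φ μ) :
    ∫ ω, φ (X ω) ∂P = ∫ z, φ z ∂μ := by
  subst hlaw
  exact (integral_map hX hφ).symm

theorem AEMeasurable.of_map_eq [IsProbabilityMeasure μ] {X : Ω → E} (hlaw : P.map X = μ) :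
    AEMeasurable X P :=
  .of_map_ne_zero (hlaw ▸ IsProbabilityMeasure.ne_zero μ)

theorem integrable_norm_sampleMean_sub_sq [IsFiniteMeasure P] [IsProbabilityMeasure μ]
    [Nonempty ι] {Z : ι → Ω → E} (hlaw : ∀ j, P.map (Z j) = μ) {g : E → F}
    (hg : AEStronglyMeasurable g μ) {K : ℝ} (hgK : ∀ z, ‖g z‖ ≤ K) :
    Integrable (fun ω => ‖(Fintype.card ι : ℝ)⁻¹ • ∑ j, g (Z j ω) - ∫ z, g z ∂μ‖ ^ 2) P := by
  have hZ (j : ι) : AEMeasurable (Z j) P := .of_map_eq (hlaw j)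
  have hmeas : AEStronglyMeasurable (fun ω => (Fintype.card ι : ℝ)⁻¹ • ∑ j, g (Z j ω)) P :=
    (Finset.aestronglyMeasurable_fun_sum _ fun j _ =>
      AEStronglyMeasurable.comp_aemeasurable (by rw [hlaw j]; exact hg) (hZ j)).const_smul _
  refine .of_bound ((hmeas.sub aestronglyMeasurable_const).norm.pow 2) ((K + K) ^ 2)
    (ae_of_all _ fun ω => ?_)
  have hint : ‖∫ z, g z ∂μ‖ ≤ K := by
    simpa using norm_integral_le_of_norm_le_const (ae_of_all μ hgK)
  rw [Real.norm_of_nonneg (by positivity)]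
  gcongr
  exact (norm_sub_le _ _).trans (add_le_add (norm_inv_card_smul_sum_le fun j => hgK _) hint)

theorem integral_norm_sampleMean_sub_sq_le [IsFiniteMeasure P] [IsProbabilityMeasure μ]
    [CompleteSpace F] [Nonempty ι] {Z : ι → Ω → E} (hind : iIndepFun Z P)
    (hlaw : ∀ j, P.map (Z j) = μ) {g : E → F} (hg : AEStronglyMeasurable g μ) {K : ℝ}
    (hgK : ∀ z, ‖g z‖ ≤ K) :
    ∫ ω, ‖(Fintype.card ι : ℝ)⁻¹ • ∑ j, g (Z j ω) - ∫ z, g z ∂μ‖ ^ 2 ∂P ≤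
      K ^ 2 / Fintype.card ι := by
  set a := ∫ z, g z ∂μ
  have hZ (j : ι) : AEMeasurable (Z j) P := .of_map_eq (hlaw j)
  have hgint : Integrable g μ := .of_bound hg K (ae_of_all _ hgK)
  have hcent : Integrable (fun z => g z - a) μ := hgint.sub (integrable_const a)
  have hmean (j : ι) : ∫ ω, g (Z j ω) - a ∂P = 0 := by
    rw [integral_comp_of_map_eq (hZ j) (hlaw j) hcent.1, integral_sub hgint (integrable_const a),
      integral_const, probReal_univ, one_smul, sub_self]
  have horth : Pairwise fun i j => ∫ ω, ⟪g (Z i ω) - a, g (Z j ω) - a⟫_ℝ ∂P = 0 := by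
    intro i j hij
    have := (hind.indepFun hij).integral_bilin_comp_comp (hZ i) (hZ j)
      ((hlaw i).symm ▸ hcent) ((hlaw j).symm ▸ hcent) (innerSL ℝ)
    rwa [hmean, hmean, map_zero] at this
  have hinner (i j : ι) : Integrable (fun ω => ⟪g (Z i ω) - a, g (Z j ω) - a⟫_ℝ) P := by
    have hV (j : ι) : AEStronglyMeasurable (fun ω => g (Z j ω) - a) P :=
      AEStronglyMeasurable.comp_aemeasurable (g := fun z => g z - a)
        (by rw [hlaw j]; exact hcent.1) (hZ j)
    have hVC (j : ι) (ω : Ω) : ‖g (Z j ω) - a‖ ≤ K + ‖a‖ :=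
      (norm_sub_le _ _).trans (add_le_add_left (hgK _) _)
    refine .of_bound ((hV i).inner (hV j)) ((K + ‖a‖) ^ 2) (ae_of_all _ fun ω => ?_)
    rw [sq]
    exact (norm_inner_le_norm _ _).trans
      (mul_le_mul (hVC i ω) (hVC j ω) (norm_nonneg _) ((norm_nonneg _).trans (hVC i ω)))
  have hdiag (j : ι) : ∫ ω, ‖g (Z j ω) - a‖ ^ 2 ∂P ≤ K ^ 2 := by
    rw [integral_comp_of_map_eq (hZ j) (hlaw j) (φ := fun z => ‖g z - a‖ ^ 2)
      (hcent.1.norm.pow 2)]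
    exact integral_norm_sub_integral_sq_le hg hgK
  calc ∫ ω, ‖(Fintype.card ι : ℝ)⁻¹ • ∑ j, g (Z j ω) - a‖ ^ 2 ∂P
      = (Fintype.card ι : ℝ)⁻¹ ^ 2 * ∑ j, ∫ ω, ‖g (Z j ω) - a‖ ^ 2 ∂P := by
        simp_rw [inv_card_smul_sum_sub_eq, norm_smul, mul_pow, norm_inv, Real.norm_natCast]
        rw [integral_const_mul, integral_norm_sum_sq_of_orthogonal hinner horth]
    _ ≤ (Fintype.card ι : ℝ)⁻¹ ^ 2 * ∑ _j : ι, K ^ 2 := by gcongr with j; exact hdiag j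
    _ = K ^ 2 / Fintype.card ι := by
        rw [Finset.sum_const, Finset.card_univ, nsmul_eq_mul]
        field_simp

theorem integral_norm_ratio_sub_sampleRatio_sq_le [IsFiniteMeasure P] [IsProbabilityMeasure μ]
    [CompleteSpace F] [Nonempty ι] {Z : ι → Ω → E} (hind : iIndepFun Z P)
    (hlaw : ∀ j, P.map (Z j) = μ) {u : E → ℝ} {v : E → F} (hu : AEStronglyMeasurable u μ)
    (hv : AEStronglyMeasurable v μ) {ξ ζ K : ℝ} (hξ : 0 < ξ) (hu_mem : ∀ z, u z ∈ Icc ξ ζ)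
    (hvK : ∀ z, ‖v z‖ ≤ K) :
    ∫ ω, ‖(∫ z, u z ∂μ)⁻¹ • ∫ z, v z ∂μ -
        ((Fintype.card ι : ℝ)⁻¹ * ∑ j, u (Z j ω))⁻¹ •
          ((Fintype.card ι : ℝ)⁻¹ • ∑ j, v (Z j ω))‖ ^ 2 ∂P ≤
      2 / ξ ^ 2 * (K ^ 2 / Fintype.card ι) + 2 * K ^ 2 / ξ ^ 4 * (ζ ^ 2 / Fintype.card ι) := by
  have huζ (z : E) : ‖u z‖ ≤ ζ :=
    abs_le.2 ⟨by linarith [(hu_mem z).1, (hu_mem z).2], (hu_mem z).2⟩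
  have hA : ‖∫ z, v z ∂μ‖ ≤ K := by
    simpa using norm_integral_le_of_norm_le_const (ae_of_all μ hvK)
  have hB : ξ ≤ ∫ z, u z ∂μ := by
    simpa using integral_mono (integrable_const ξ) (.of_bound hu ζ (ae_of_all _ huζ))
      fun z => (hu_mem z).1
  have hv_int := integrable_norm_sampleMean_sub_sq hlaw hv hvK
  have hu_int := integrable_norm_sampleMean_sub_sq hlaw hu huζ
  have hv_mc := integral_norm_sampleMean_sub_sq_le hind hlaw hv hvK
  have hu_mc := integral_norm_sampleMean_sub_sq_le hind hlaw hu huζ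
  simp only [smul_eq_mul, Real.norm_eq_abs, sq_abs] at hu_int hu_mc
  calc _ ≤ ∫ ω, (2 / ξ ^ 2 * ‖(Fintype.card ι : ℝ)⁻¹ • ∑ j, v (Z j ω) - ∫ z, v z ∂μ‖ ^ 2 +
          2 * K ^ 2 / ξ ^ 4 * ((Fintype.card ι : ℝ)⁻¹ * ∑ j, u (Z j ω) - ∫ z, u z ∂μ) ^ 2) ∂P :=
        integral_mono_of_nonneg (ae_of_all _ fun _ => by positivity)
          ((hv_int.const_mul _).add (hu_int.const_mul _)) (ae_of_all _ fun ω =>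
            norm_inv_smul_sub_inv_smul_sq_le hξ hB
              (le_inv_card_mul_sum fun j => (hu_mem _).1) hA)
    _ ≤ _ := by
        rw [integral_add (hv_int.const_mul _) (hu_int.const_mul _), integral_const_mul,
          integral_const_mul]
        gcongr

end MonteCarlo

theorem sampleRatio_bound_le {ξ ζ γ : ℝ} {d m : ℕ} (hξ : 0 < ξ) (hξζ : ξ ≤ ζ) (hd : 0 < d) :
    2 / ξ ^ 2 * (γ ^ 2 / m) + 2 * γ ^ 2 / ξ ^ 4 * (ζ ^ 2 / m) ≤
      4 * d / m * (γ ^ 4 / ξ ^ 4 + γ ^ 2 * ζ ^ 2 / ξ ^ 4) := by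
  have h : 2 / ξ ^ 2 * (γ ^ 2 / m) ≤ 2 * γ ^ 2 / ξ ^ 4 * (ζ ^ 2 / m) := by
    rw [show 2 / ξ ^ 2 * (γ ^ 2 / m) = 2 * γ ^ 2 / ξ ^ 4 * (ξ ^ 2 / m) by field_simp]
    gcongr
  calc _ ≤ 4 * 1 / m * (γ ^ 2 * ζ ^ 2 / ξ ^ 4) := by
        rw [show 4 * 1 / m * (γ ^ 2 * ζ ^ 2 / ξ ^ 4) = 2 * (2 * γ ^ 2 / ξ ^ 4 * (ζ ^ 2 / m)) by
          ring]
        linarith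
    _ ≤ 4 * d / m * (γ ^ 2 * ζ ^ 2 / ξ ^ 4) := by gcongr; exact_mod_cast hd
    _ ≤ _ := by gcongr; exact le_add_of_nonneg_left (by positivity)

theorem stmt13_general {d : ℕ} (f : EuclideanSpace ℝ (Fin d) → ℝ)
    (ξ ζ γ : ℝ) (hξ : 0 < ξ)
    (hbound : ∀ x, f x ∈ Set.Icc ξ ζ)
    (hfl : ∀ x y, |f x - f y| ≤ γ * ‖x - y‖)
    (σ : ℝ)
    (m : ℕ) (hm : 0 < m)
    {Ω : Type*} [MeasurableSpace Ω] (P : Measure Ω) [IsProbabilityMeasure P]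
    (Z : Fin m → Ω → EuclideanSpace ℝ (Fin d))
    (hZindep : iIndepFun Z P)
    (hZlaw : ∀ j, Measure.map (Z j) P = stdGaussian d) :
    ∀ x : EuclideanSpace ℝ (Fin d), ∀ t ∈ Set.Icc (0:ℝ) 1,
      ∫ ω, ‖driftSF f σ x t -
          ((m : ℝ)⁻¹ * ∑ j, f (x + Real.sqrt ((1 - t) * σ) • Z j ω))⁻¹ •
            ((m : ℝ)⁻¹ • ∑ j, gradient f (x + Real.sqrt ((1 - t) * σ) • Z j ω))‖ ^ 2 ∂P ≤
        (4 * d / m) * (γ ^ 4 / ξ ^ 4 + γ ^ 2 * ζ ^ 2 / ξ ^ 4) := by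
  intro x t _
  obtain rfl | hd := Nat.eq_zero_or_pos d
  · simp [Subsingleton.elim _ (0 : EuclideanSpace ℝ (Fin 0))]
  have : Nonempty (Fin m) := ⟨⟨0, hm⟩⟩
  have hlip : LipschitzWith (Real.nnabs γ) f := .of_dist_le_mul fun a b => by
    rw [Real.dist_eq, dist_eq_norm, Real.coe_nnabs]
    exact (hfl a b).trans (by gcongr; exact le_abs_self γ)
  have key := integral_norm_ratio_sub_sampleRatio_sq_le hZindep hZlaw
    (u := fun z => f (x + √((1 - t) * σ) • z)) (v := fun z => gradient f (x + √((1 - t) * σ) • z))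
    (hlip.continuous.comp (by fun_prop)).aestronglyMeasurable
    ((measurable_gradient f).comp (by fun_prop)).aestronglyMeasurable hξ (fun z => hbound _)
    (fun z => norm_gradient_le_of_lipschitzWith hlip _)
  rw [Fintype.card_fin, Real.coe_nnabs, sq_abs] at key
  exact key.trans (sampleRatio_bound_le hξ ((hbound 0).1.trans (hbound 0).2) hd)

/-- Monte Carlo approximation of the Schrödinger–Föllmer drift: if `ξ ≤ f ≤ ζ` with
`0 < ξ`, `f` and `∇f` are `γ`-Lipschitz, and `Z₁, …, Z_m` are i.i.d. `N(0, I_d)`, then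
`E ‖b(x,t) - b̃_m(x,t)‖² ≤ (4d/m) (γ⁴/ξ⁴ + γ²ζ²/ξ⁴)`, uniformly in `x` and `t ∈ [0,1]`. -/
theorem stmt13 {d : ℕ} (f : EuclideanSpace ℝ (Fin d) → ℝ)
    (hf : ContDiff ℝ 1 f)
    (ξ ζ γ : ℝ) (hξ : 0 < ξ) (hξζ : ξ ≤ ζ)
    (hbound : ∀ x, f x ∈ Set.Icc ξ ζ)
    (hfl : ∀ x y, |f x - f y| ≤ γ * ‖x - y‖)
    (hgl : ∀ x y, ‖gradient f x - gradient f y‖ ≤ γ * ‖x - y‖)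
    (σ : ℝ) (hσ : σ ∈ Set.Ioc (0:ℝ) 1)
    (m : ℕ) (hm : 0 < m)
    {Ω : Type*} [MeasurableSpace Ω] (P : Measure Ω) [IsProbabilityMeasure P]
    (Z : Fin m → Ω → EuclideanSpace ℝ (Fin d))
    (hZmeas : ∀ j, Measurable (Z j))
    (hZindep : iIndepFun Z P)
    (hZlaw : ∀ j, Measure.map (Z j) P = stdGaussian d) :
    ∀ x : EuclideanSpace ℝ (Fin d), ∀ t ∈ Set.Icc (0:ℝ) 1,
      ∫ ω, ‖driftSF f σ x t -
          ((m : ℝ)⁻¹ * ∑ j, f (x + Real.sqrt ((1 - t) * σ) • Z j ω))⁻¹ •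
            ((m : ℝ)⁻¹ • ∑ j, gradient f (x + Real.sqrt ((1 - t) * σ) • Z j ω))‖ ^ 2 ∂P ≤
        (4 * d / m) * (γ ^ 4 / ξ ^ 4 + γ ^ 2 * ζ ^ 2 / ξ ^ 4) :=
  stmt13_general f ξ ζ γ hξ hbound hfl σ m hm P Z hZindep hZlaw
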